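/- arXiv:0706.1312 — 4 statements merged into one kernel-verified Lean document; each statement's English description precedes it below -/
import Mathlib

section
/- Let K be an infinite field and E, F be K-vector spaces. For each m, let F[E]_m denote the set of functions f : E → F of the form f(x) = u(x,...,x) for some m-linear map u : E^m → F. Then the subspaces F[E]_m of the vector space of all functions E → F are linearly independent: if f_0 + f_1 + ... + f_r = 0 with f_m ∈ F[E]_m for each m, then every f_m = 0. -/
/-- Auxiliary: if a "polynomial" with vector coefficients vanishes for all scalars
over an infinite field, all coefficients vanish. -/
lemma aux_coeff_zero (K : Type*) [Field K] [Infinite K]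
    (F : Type*) [AddCommGroup F] [Module K F] (n : ℕ) (v : ℕ → F)
    (h : ∀ c : K, ∑ m ∈ Finset.range n, c ^ m • v m = 0) :
    ∀ m < n, v m = 0 := by
  intro m hm
  rw [← Module.forall_dual_apply_eq_zero_iff K]
  intro φ
  set p : Polynomial K := ∑ k ∈ Finset.range n, Polynomial.C (φ (v k)) * Polynomial.X ^ k with hp
  have hpz : p = 0 := by
    apply Polynomial.zero_of_eval_zero
    intro c
    have := congrArg φ (h c)
    rw [map_sum] at this
    simp only [map_smul, smul_eq_mul] at this
    simp only [hp, Polynomial.eval_finset_sum, Polynomial.eval_mul, Polynomial.eval_C,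
      Polynomial.eval_pow, Polynomial.eval_X]
    simpa [mul_comm] using this
  have := congrArg (fun q => Polynomial.coeff q m) hpz
  simpa [hp, Polynomial.finset_sum_coeff, Polynomial.coeff_C_mul,
    Polynomial.coeff_X_pow, Finset.sum_ite_eq', hm] using this

/-- over an infinite field, the spaces of homogeneous polynomial maps
of the various degrees are linearly independent inside the space of all functions. -/
theorem stmt0 (K : Type*) [Field K] [Infinite K]
    (E F : Type*) [AddCommGroup E] [Module K E] [AddCommGroup F] [Module K F]
    (r : ℕ) (f : ℕ → E → F)
    (hf : ∀ m, ∃ u : MultilinearMap K (fun _ : Fin m => E) F, ∀ x, f m x = u (fun _ => x))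
    (hsum : ∀ x, ∑ m ∈ Finset.range (r + 1), f m x = 0) :
    ∀ m ≤ r, f m = 0 := by
  intro m hm
  funext x
  have key : ∀ c : K, ∑ k ∈ Finset.range (r + 1), c ^ k • f k x = 0 := by
    intro c
    have h := hsum (c • x)
    have : ∀ k, f k (c • x) = c ^ k • f k x := by
      intro k
      obtain ⟨u, hu⟩ := hf k
      rw [hu, hu]
      have := u.map_smul_univ (fun _ : Fin k => c) (fun _ => x)
      simpa using this
    rw [Finset.sum_congr rfl fun k _ => this k] at h
    exact h
  simpa using aux_coeff_zero K F (r + 1) (fun k => f k x) key m (Nat.lt_succ_of_le hm)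
end

section
/- Let K be an infinite field, E and F K-vector spaces, and u, v : E^m → F two m-multilinear maps. If u(x,...,x) = v(x,...,x) for all x ∈ E, then for all z = (z_1,...,z_r) ∈ E^r and all p = (p_1,...,p_r) ∈ ℕ^r with p_1 + ... + p_r = m, the symmetrized values ũ(z;p) and ṽ(z;p) are equal, where ũ(z;p) is the sum of u(z_{s(1)},...,z_{s(m)}) over all sequences s : {1,...,m} → {1,...,r} in which each index j occurs exactly p_j times. -/
/-- The `p`-symmetrization `ũ(z;p)` of an `m`-multilinear map `u`: the sum of
`u(z_{s(1)},…,z_{s(m)})` over all maps `s : Fin m → Fin r` in which each index `j`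
occurs exactly `p j` times. -/
def symmetrized {K E F : Type*} [Field K] [AddCommGroup E] [Module K E]
    [AddCommGroup F] [Module K F] {m r : ℕ}
    (u : MultilinearMap K (fun _ : Fin m => E) F) (z : Fin r → E) (p : Fin r → ℕ) : F :=
  ∑ s ∈ (Finset.univ : Finset (Fin m → Fin r)).filter
      (fun s => ∀ j, (Finset.univ.filter (fun i => s i = j)).card = p j),
    u (fun i => z (s i))

open Finset MvPolynomial in
lemma prod_X_comp {R σ ι : Type*} [CommSemiring R] (t : Finset ι) (s : ι → σ) :
    (∏ i ∈ t, (X (s i) : MvPolynomial σ R))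
      = monomial (∑ i ∈ t, Finsupp.single (s i) 1) (1 : R) := by
  induction t using Finset.cons_induction with
  | empty => simp
  | cons a t ha ih =>
      rw [Finset.prod_cons, Finset.sum_cons, ih, ← pow_one (X (s a)), X_pow_eq_monomial,
        monomial_mul, one_mul]

/-- multilinear maps determining the same homogeneous polynomial have
equal symmetrizations (over an infinite field). -/
theorem stmt4 {K E F : Type*} [Field K] [Infinite K] [AddCommGroup E] [Module K E]
    [AddCommGroup F] [Module K F] {m r : ℕ}
    (u v : MultilinearMap K (fun _ : Fin m => E) F)
    (huv : ∀ x : E, u (fun _ => x) = v (fun _ => x)) :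
    ∀ (z : Fin r → E) (p : Fin r → ℕ), (∑ j, p j) = m →
      symmetrized u z p = symmetrized v z p := by
  classical
  intro z p _
  rw [← sub_eq_zero, ← Module.forall_dual_apply_eq_zero_iff K]
  intro f
  -- scalar-valued polynomials encoding `f ∘ u` and `f ∘ v`
  set P : MvPolynomial (Fin r) K :=
    ∑ s : Fin m → Fin r, MvPolynomial.C (f (u fun i => z (s i))) * ∏ i, MvPolynomial.X (s i)
    with hPdef
  set Q : MvPolynomial (Fin r) K :=
    ∑ s : Fin m → Fin r, MvPolynomial.C (f (v fun i => z (s i))) * ∏ i, MvPolynomial.X (s i)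
    with hQdef
  have expand : ∀ (w : MultilinearMap K (fun _ : Fin m => E) F) (c : Fin r → K),
      w (fun _ => ∑ j, c j • z j)
        = ∑ s : Fin m → Fin r, (∏ i, c (s i)) • w (fun i => z (s i)) := by
    intro w c
    rw [show (fun _ : Fin m => ∑ j, c j • z j)
        = fun i => ∑ j, (fun (_ : Fin m) (j : Fin r) => c j • z j) i j from rfl,
      MultilinearMap.map_sum]
    exact Finset.sum_congr rfl fun s _ => w.map_smul_univ _ _
  have hPQ : P = Q := by
    apply MvPolynomial.funext
    intro c
    have hu := congrArg f ((expand u c).symm.trans ((huv _).trans (expand v c)))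
    simp only [map_sum, map_smul, smul_eq_mul] at hu
    simp only [hPdef, hQdef, map_sum, MvPolynomial.eval_mul, MvPolynomial.eval_C,
      MvPolynomial.eval_prod, MvPolynomial.eval_X]
    simpa [mul_comm] using hu
  -- extract the coefficient of the monomial `∏ X j ^ p j`
  have hcoeff := congrArg (MvPolynomial.coeff (Finsupp.equivFunOnFinite.symm p)) hPQ
  have key : ∀ (a : (Fin m → Fin r) → K),
      MvPolynomial.coeff (Finsupp.equivFunOnFinite.symm p)
        (∑ s : Fin m → Fin r, MvPolynomial.C (a s) * ∏ i, MvPolynomial.X (s i))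
      = ∑ s ∈ (Finset.univ : Finset (Fin m → Fin r)).filter
          (fun s => ∀ j, (Finset.univ.filter (fun i => s i = j)).card = p j), a s := by
    intro a
    rw [MvPolynomial.coeff_sum]
    rw [Finset.sum_filter]
    refine Finset.sum_congr rfl fun s _ => ?_
    rw [prod_X_comp, MvPolynomial.coeff_C_mul, MvPolynomial.coeff_monomial]
    have hiff : (∑ i : Fin m, Finsupp.single (s i) 1) = Finsupp.equivFunOnFinite.symm p
        ↔ ∀ j, (Finset.univ.filter (fun i => s i = j)).card = p j := by
      rw [Finsupp.ext_iff]
      refine forall_congr' fun j => ?_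
      have h1 : (∑ i : Fin m, Finsupp.single (s i) 1) j
          = (Finset.univ.filter (fun i => s i = j)).card := by
        rw [Finset.card_filter, Finsupp.finset_sum_apply]
        exact Finset.sum_congr rfl fun i _ => by
          rw [Finsupp.single_apply]
      have h2 : Finsupp.equivFunOnFinite.symm p j = p j := rfl
      rw [h1, h2]
    rw [mul_ite, mul_one, mul_zero]
    exact if_congr hiff rfl rfl
  rw [hPdef, hQdef, key, key] at hcoeff
  simp only [symmetrized, map_sub, map_sum]
  rw [sub_eq_zero]
  exact hcoeff
end

section
/- Let G(T) = T·e^T/(e^T − 1) ∈ ℚ[[T]]. Then G satisfies the identity G(x+y) = L(x,y) + L(y,x) in ℚ[[x,y]], where L(x,y) = ((G(x+y) − G(y))/x)·G(x). -/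
/-- The generating series `G(T) = T·e^T/(e^T − 1) = e^T · ((e^T − 1)/T)⁻¹ ∈ ℚ[[T]]`. -/
noncomputable def bernG : PowerSeries ℚ :=
  PowerSeries.exp ℚ * (PowerSeries.mk fun n => (1 : ℚ) / (n + 1).factorial)⁻¹

/-- The coefficients `t_n` of `G(T) = Σ_n t_n T^n`. -/
noncomputable def tcoef (n : ℕ) : ℚ := PowerSeries.coeff n bernG

/-!
Write `E(T) = (e^T − 1)/T`, a unit of `ℚ[[T]]`, so that `G·E = e^T` and `T·E = e^T − 1`.
Substituting `T ↦ x, y, x + y` and using `e^x e^y = e^(x+y)`, multiplying by `E(x)E(y)` turns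
`G(x+y)·(y G(x) + x G(y) − x y)` into `G(x+y)·(e^(x+y) − 1) = (x + y)·e^(x+y)`, which is
`(x + y)·G(x)G(y)·E(x)E(y)`. Hence `G(x+y)(y G(x) + x G(y) − x y) = (x + y) G(x) G(y)`, and
this is `x y` times the claimed identity `G(x+y) = L(x,y) + L(y,x)`.
-/

section FunctionalEquation

variable {B : Type*} [CommRing B]

-- `g`, `e`, `u` stand for `G`, `e^T`, `E` evaluated at `x`, `y` and `x + y`.
theorem mul_add_mul_sub_eq_of_exp_add {x y gx gy gxy ex ey ux uy uxy : B}
    (hux : IsUnit ux) (huy : IsUnit uy)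
    (hgx : gx * ux = ex) (hgy : gy * uy = ey) (hgxy : gxy * uxy = ex * ey)
    (hx : x * ux = ex - 1) (hy : y * uy = ey - 1) (hxy : (x + y) * uxy = ex * ey - 1) :
    gxy * (y * gx + x * gy - x * y) = (x + y) * (gx * gy) := by
  rw [← (hux.mul huy).mul_left_inj]
  linear_combination (gxy * y * uy - (x + y) * gy * uy) * hgx
    + (gxy * x * ux - (x + y) * ex) * hgy + (gxy * ex - gxy * x * ux) * hy + gxy * hx
    + (x + y) * hgxy - gxy * hxy

theorem eq_add_of_mul_add_mul_sub_eq [NoZeroDivisors B] {x y gx gy gxy l₁ l₂ : B}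
    (hx : x ≠ 0) (hy : y ≠ 0) (h : gxy * (y * gx + x * gy - x * y) = (x + y) * (gx * gy))
    (hl₁ : x * l₁ = (gxy - gy) * gx) (hl₂ : y * l₂ = (gxy - gx) * gy) :
    gxy = l₁ + l₂ := by
  apply mul_left_cancel₀ (mul_ne_zero hx hy)
  linear_combination -y * hl₁ - x * hl₂ - h

end FunctionalEquation

theorem MvPowerSeries.X_ne_zero {σ R : Type*} [Semiring R] [Nontrivial R] (s : σ) :
    (X s : MvPowerSeries σ R) ≠ 0 := fun h => by
  classical
  simpa [coeff_X] using congrArg (coeff (Finsupp.single s 1)) h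

open PowerSeries

noncomputable def expSubOneDivX : ℚ⟦X⟧ := mk fun n => 1 / (n + 1).factorial

theorem constantCoeff_expSubOneDivX : constantCoeff expSubOneDivX = 1 := by
  simp [expSubOneDivX, ← coeff_zero_eq_constantCoeff_apply]

theorem isUnit_expSubOneDivX : IsUnit expSubOneDivX :=
  isUnit_iff_constantCoeff.mpr (constantCoeff_expSubOneDivX ▸ isUnit_one)

theorem X_mul_expSubOneDivX : X * expSubOneDivX = exp ℚ - 1 := by
  ext (_ | n)
  · simp
  · rw [mul_comm, coeff_succ_mul_X]
    simp [expSubOneDivX, coeff_exp]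

theorem bernG_mul_expSubOneDivX : bernG * expSubOneDivX = exp ℚ := by
  change exp ℚ * expSubOneDivX⁻¹ * expSubOneDivX = exp ℚ
  rw [mul_assoc, PowerSeries.inv_mul_cancel _ (by simp [constantCoeff_expSubOneDivX]), mul_one]

section Subst

variable {σ : Type*} {a : MvPowerSeries σ ℚ}

theorem subst_bernG_mul_subst_expSubOneDivX (ha : HasSubst a) :
    subst a bernG * subst a expSubOneDivX = subst a (exp ℚ) := by
  rw [← subst_mul ha, bernG_mul_expSubOneDivX]

theorem mul_subst_expSubOneDivX (ha : HasSubst a) :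
    a * subst a expSubOneDivX = subst a (exp ℚ) - 1 := by
  have h := congrArg (substAlgHom ha) X_mul_expSubOneDivX
  rwa [map_mul, map_sub, map_one, coe_substAlgHom, subst_X ha] at h

theorem isUnit_subst_expSubOneDivX (ha : HasSubst a) : IsUnit (subst a expSubOneDivX) := by
  simpa [coe_substAlgHom] using isUnit_expSubOneDivX.map (substAlgHom ha)

end Subst

theorem subst_X_zero_exp_mul_subst_X_one_exp {A : Type*} [CommRing A] [Algebra ℚ A] :
    subst (MvPowerSeries.X 0) (exp A) * subst (MvPowerSeries.X 1) (exp A) =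
      (subst (MvPowerSeries.X 0 + MvPowerSeries.X 1) (exp A) : MvPowerSeries (Fin 2) A) := by
  ext p
  rw [coeff_subst_X_zero_subst_mul_X_one, coeff_subst_X_zero_add_X_one, coeff_exp, coeff_exp,
    coeff_exp, ← map_natCast (algebraMap ℚ A), ← map_mul, ← map_mul, Nat.cast_add_choose]
  field_simp

/-- in `ℚ[[x,y]]` one has `G(x+y) = L(x,y) + L(y,x)` with
`L(x,y) = ((G(x+y) − G(y))/x)·G(x)`.  Here `Gxy`, `Gx`, `Gy` are the series
`G(x+y)`, `G(x)`, `G(y)` in `ℚ[[x,y]]` (characterized by their coefficients: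
the coefficient of `x^a y^b` in `G(x+y)` is `C(a+b,a)·t_{a+b}`), and `L₁ = L(x,y)`,
`L₂ = L(y,x)` are the quotients witnessing the divisibility by `x` resp. `y`. -/
theorem stmt14 (Gxy Gx Gy L1 L2 : MvPowerSeries (Fin 2) ℚ)
    (hGxy : ∀ p : Fin 2 →₀ ℕ,
      MvPowerSeries.coeff p Gxy = ((p 0 + p 1).choose (p 0) : ℚ) * tcoef (p 0 + p 1))
    (hGx : ∀ p : Fin 2 →₀ ℕ,
      MvPowerSeries.coeff p Gx = if p 1 = 0 then tcoef (p 0) else 0)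
    (hGy : ∀ p : Fin 2 →₀ ℕ,
      MvPowerSeries.coeff p Gy = if p 0 = 0 then tcoef (p 1) else 0)
    (hL1 : MvPowerSeries.X 0 * L1 = (Gxy - Gy) * Gx)
    (hL2 : MvPowerSeries.X 1 * L2 = (Gxy - Gx) * Gy) :
    Gxy = L1 + L2 := by
  have hX₀ : HasSubst (MvPowerSeries.X 0 : MvPowerSeries (Fin 2) ℚ) := HasSubst.X 0
  have hX₁ : HasSubst (MvPowerSeries.X 1 : MvPowerSeries (Fin 2) ℚ) := HasSubst.X 1
  have hX₀₁ := hX₀.add hX₁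
  obtain rfl : Gx = subst (MvPowerSeries.X 0) bernG := by
    ext p
    rw [hGx, coeff_subst_single]
    simp [Finsupp.ext_iff, Fin.forall_fin_two, tcoef]
  obtain rfl : Gy = subst (MvPowerSeries.X 1) bernG := by
    ext p
    rw [hGy, coeff_subst_single]
    simp [Finsupp.ext_iff, Fin.forall_fin_two, tcoef]
  obtain rfl : Gxy = subst (MvPowerSeries.X 0 + MvPowerSeries.X 1) bernG := by
    ext p
    rw [hGxy, coeff_subst_X_zero_add_X_one, tcoef]
  have hexp := subst_X_zero_exp_mul_subst_X_one_exp (A := ℚ)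
  exact eq_add_of_mul_add_mul_sub_eq (MvPowerSeries.X_ne_zero 0) (MvPowerSeries.X_ne_zero 1)
    (mul_add_mul_sub_eq_of_exp_add (isUnit_subst_expSubOneDivX hX₀)
      (isUnit_subst_expSubOneDivX hX₁) (subst_bernG_mul_subst_expSubOneDivX hX₀)
      (subst_bernG_mul_subst_expSubOneDivX hX₁)
      (hexp ▸ subst_bernG_mul_subst_expSubOneDivX hX₀₁) (mul_subst_expSubOneDivX hX₀)
      (mul_subst_expSubOneDivX hX₁) (hexp ▸ mul_subst_expSubOneDivX hX₀₁)) hL1 hL2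
end

section
/- Let D be a derivation of a Lie algebra B over a field of characteristic zero. Then for all a, b ∈ B and every natural number m: Σ_{k=0}^{m} (D^k[a, D^{m−k}b] + D^k[D^{m−k}a, b]) = Σ_{i=0}^{m} C(m+2, i+1)·[D^i a, D^{m−i} b]. -/
/-!
Expanding each `D^k⁅x, D^{m-k}y⁆` by the Leibniz rule and collecting the coefficient of
`⁅D^i x, D^{m-i} y⁆` gives `∑_{k=i}^{m} C(k,i) = C(m+1,i+1)` (hockey stick). The second sum is the
first one with the arguments swapped, so by skew-symmetry and reflecting `i ↦ m - i` it carries the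
coefficients `C(m+1,i)`; Pascal's rule adds the two up to `C(m+2,i+1)`.
-/

open Finset

section

variable {R L : Type*} [CommRing R] [LieRing L] [LieAlgebra R L]
  (D : Module.End R L)

theorem Module.End.pow_apply_lie_of_leibniz
    (hD : ∀ x y : L, D ⁅x, y⁆ = ⁅D x, y⁆ + ⁅x, D y⁆) (n : ℕ) (x y : L) :
    (D ^ n) ⁅x, y⁆ = ∑ i ∈ range (n + 1), n.choose i • ⁅(D ^ i) x, (D ^ (n - i)) y⁆ := by
  let δ : LieDerivation R L L :=
    { toLinearMap := D
      leibniz' := fun x y => by rw [hD, ← lie_skew (D x), sub_eq_add_neg, add_comm] }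
  simp only [Module.End.pow_apply]
  exact δ.iterate_apply_lie' n x y

theorem Module.End.sum_pow_apply_lie_pow_sub
    (hD : ∀ x y : L, D ⁅x, y⁆ = ⁅D x, y⁆ + ⁅x, D y⁆) (m : ℕ) (x y : L) :
    ∑ k ∈ range (m + 1), (D ^ k) ⁅x, (D ^ (m - k)) y⁆ =
      ∑ i ∈ range (m + 1), (m + 1).choose (i + 1) • ⁅(D ^ i) x, (D ^ (m - i)) y⁆ := by
  have leibniz : ∀ k ∈ range (m + 1), (D ^ k) ⁅x, (D ^ (m - k)) y⁆ =
      ∑ i ∈ range (k + 1), k.choose i • ⁅(D ^ i) x, (D ^ (m - i)) y⁆ := by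
    intro k hk
    rw [D.pow_apply_lie_of_leibniz hD]
    refine sum_congr rfl fun i hi => ?_
    rw [← Module.End.mul_apply, ← pow_add]
    congr 4
    simp only [mem_range] at hk hi
    omega
  rw [sum_congr rfl leibniz, sum_comm' (t' := range (m + 1)) (s' := fun i => Icc i m)]
  · refine sum_congr rfl fun i _ => ?_
    rw [← sum_smul, Nat.sum_Icc_choose]
  · intro k i
    simp only [mem_range, mem_Icc]
    omega

theorem Module.End.sum_pow_apply_pow_sub_lie
    (hD : ∀ x y : L, D ⁅x, y⁆ = ⁅D x, y⁆ + ⁅x, D y⁆) (m : ℕ) (x y : L) :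
    ∑ k ∈ range (m + 1), (D ^ k) ⁅(D ^ (m - k)) x, y⁆ =
      ∑ i ∈ range (m + 1), (m + 1).choose i • ⁅(D ^ i) x, (D ^ (m - i)) y⁆ := by
  calc ∑ k ∈ range (m + 1), (D ^ k) ⁅(D ^ (m - k)) x, y⁆
      = -∑ k ∈ range (m + 1), (D ^ k) ⁅y, (D ^ (m - k)) x⁆ := by
        simp only [← lie_skew y, map_neg, sum_neg_distrib, neg_neg]
    _ = ∑ i ∈ range (m + 1), (m + 1).choose (i + 1) • ⁅(D ^ (m - i)) x, (D ^ i) y⁆ := by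
        simp only [D.sum_pow_apply_lie_pow_sub hD, ← sum_neg_distrib, ← smul_neg, lie_skew]
    _ = ∑ i ∈ range (m + 1), (m + 1).choose i • ⁅(D ^ i) x, (D ^ (m - i)) y⁆ := by
        rw [← sum_range_reflect]
        refine sum_congr rfl fun i hi => ?_
        have hi : i ≤ m := Nat.lt_succ_iff.mp (mem_range.mp hi)
        rw [m.add_sub_cancel, Nat.sub_sub_self hi, ← Nat.choose_symm (by omega),
          show m + 1 - (m - i + 1) = i by omega]

end

theorem stmt18_general (K B : Type*) [Field K] [LieRing B] [LieAlgebra K B]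
    (D : Module.End K B) (hD : ∀ x y : B, D ⁅x, y⁆ = ⁅D x, y⁆ + ⁅x, D y⁆)
    (a b : B) (m : ℕ) :
    ∑ k ∈ Finset.range (m + 1),
        ((D ^ k) ⁅a, (D ^ (m - k)) b⁆ + (D ^ k) ⁅(D ^ (m - k)) a, b⁆) =
      ∑ i ∈ Finset.range (m + 1),
        (m + 2).choose (i + 1) • ⁅(D ^ i) a, (D ^ (m - i)) b⁆ := by
  rw [sum_add_distrib, D.sum_pow_apply_lie_pow_sub hD, D.sum_pow_apply_pow_sub_lie hD,
    ← sum_add_distrib]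
  refine sum_congr rfl fun i _ => ?_
  rw [← add_smul, Nat.choose_succ_succ (m + 1) i, add_comm]

/-- for a derivation `D` of a Lie algebra `B` over a field of
characteristic zero,
`Σ_{k=0}^m (D^k⁅a, D^{m−k}b⁆ + D^k⁅D^{m−k}a, b⁆) = Σ_{i=0}^m C(m+2,i+1)·⁅D^i a, D^{m−i} b⁆`. -/
theorem stmt18 (K B : Type*) [Field K] [CharZero K] [LieRing B] [LieAlgebra K B]
    (D : Module.End K B) (hD : ∀ x y : B, D ⁅x, y⁆ = ⁅D x, y⁆ + ⁅x, D y⁆)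
    (a b : B) (m : ℕ) :
    ∑ k ∈ Finset.range (m + 1),
        ((D ^ k) ⁅a, (D ^ (m - k)) b⁆ + (D ^ k) ⁅(D ^ (m - k)) a, b⁆) =
      ∑ i ∈ Finset.range (m + 1),
        (m + 2).choose (i + 1) • ⁅(D ^ i) a, (D ^ (m - i)) b⁆ :=
  stmt18_general K B D hD a b m
end
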